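/- Let p ≥ 2 and let f : ℝ^d → ℝ be convex, differentiable, L-smooth w.r.t. ‖·‖_p, and μ-strongly convex w.r.t. ‖·‖_2, with minimizer x*. Let (x_t) be HASD iterates started at x_0 ∈ ℝ^d, run for T iterations, and set 𝒢 = (1/T) ∑_{t=0}^{T-1} ‖∇f(x_{t+1})‖_{p*} / ‖∇f(x_{t+1})‖_2. If 𝒢 ≥ Ĝ ≥ 1 and T ≥ (36/Ĝ)√(L/μ), then f(x_T) − f(x*) ≤ (f(x_0) − f(x*))/2. -/

import Mathlib

open scoped BigOperators
open scoped InnerProductSpace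

/-- The `ℓ_p` "norm" on `ℝ^d` for a real exponent `p`. -/
noncomputable def pnorm (p : ℝ) {d : ℕ} (x : EuclideanSpace ℝ (Fin d)) : ℝ :=
  (∑ i, |x i| ^ p) ^ (1 / p)

/-- The dual exponent `p* = p/(p-1)`, so that `1/p + 1/p* = 1`. -/
noncomputable def dualExp (p : ℝ) : ℝ := p / (p - 1)

/-- The iterates of the Hyper-Accelerated Steepest Descent (HASD) method for
`f : ℝ^d → ℝ` differentiable, smoothness constant `L > 0`, started at `x0`. -/
structure HASD (d : ℕ) (p L : ℝ) (f : EuclideanSpace ℝ (Fin d) → ℝ)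
    (x0 : EuclideanSpace ℝ (Fin d)) where
  x : ℕ → EuclideanSpace ℝ (Fin d)
  y : ℕ → EuclideanSpace ℝ (Fin d)
  v : ℕ → EuclideanSpace ℝ (Fin d)
  a : ℕ → ℝ
  A : ℕ → ℝ
  ρ : ℕ → ℝ
  ψ : ℕ → EuclideanSpace ℝ (Fin d) → ℝ
  x_zero : x 0 = x0
  A_zero : A 0 = 0
  ψ_zero : ∀ z, ψ 0 z = (1 / 2) * pnorm 2 (z - x0) ^ 2
  /-- `v t` minimizes `ψ t` over `ℝ^d`. -/
  v_min : ∀ t z, ψ t (v t) ≤ ψ t z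
  grad_ne : ∀ t : ℕ, gradient f (x (t + 1)) ≠ 0
  ρ_pos : ∀ t : ℕ, 0 < ρ t
  ρ_lb : ∀ t : ℕ, (1 / 2) * (pnorm 2 (gradient f (x (t + 1))) ^ 2 /
      pnorm (dualExp p) (gradient f (x (t + 1))) ^ 2) ≤ ρ t
  ρ_ub : ∀ t : ℕ, ρ t ≤ 2 * (pnorm 2 (gradient f (x (t + 1))) ^ 2 /
      pnorm (dualExp p) (gradient f (x (t + 1))) ^ 2)
  a_pos : ∀ t : ℕ, 0 < a (t + 1)
  a_eq : ∀ t : ℕ, a (t + 1) ^ 2 = (A t + a (t + 1)) / (18 * L * ρ t)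
  A_succ : ∀ t : ℕ, A (t + 1) = A t + a (t + 1)
  y_def : ∀ t : ℕ, y t = (1 - a (t + 1) / A (t + 1)) • x t + (a (t + 1) / A (t + 1)) • v t
  /-- `x (t+1)` minimizes `z ↦ ⟪∇f(y t), z - y t⟫ + L ‖z - y t‖_p²` over `ℝ^d`. -/
  x_min : ∀ (t : ℕ) (z : EuclideanSpace ℝ (Fin d)),
      ⟪gradient f (y t), x (t + 1) - y t⟫_ℝ + L * pnorm p (x (t + 1) - y t) ^ 2 ≤
      ⟪gradient f (y t), z - y t⟫_ℝ + L * pnorm p (z - y t) ^ 2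
  ψ_succ : ∀ (t : ℕ) (z : EuclideanSpace ℝ (Fin d)),
      ψ (t + 1) z = ψ t z + a (t + 1) * (f (x (t + 1)) + ⟪gradient f (x (t + 1)), z - x (t + 1)⟫_ℝ)

/-!
Estimate-sequence argument. Every `ψ t` equals `ψ t (v t) + ‖· - v t‖² / 2`, and convexity gives
`ψ t z ≤ A t * f z + ‖z - x0‖² / 2`; so the invariant `A t * f (x t) ≤ ψ t (v t)` yields
`A T * (f (x T) - f x⋆) ≤ ‖x⋆ - x0‖² / 2 ≤ (f x0 - f x⋆) / μ`. The invariant survives a step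
because the `ℓ_p` steepest-descent step from `y t` gives
`⟪∇f (x (t+1)), y t - x (t+1)⟫ ≥ ‖∇f‖_{p*}² / (16 L)`, which pays for the `a² ‖∇f‖² / 2` lost
in `ψ`. The choice of `a (t+1)` through `ρ t` makes `√A` grow by at least
`‖∇f‖_{p*} / (12 √L ‖∇f‖₂)` per step, so `√(A T) ≥ T 𝒢 / (12 √L) ≥ 3 / √μ`.
-/

variable {d : ℕ}

section LpNorm

variable {p q : ℝ}

lemma pnorm_nonneg (p : ℝ) (x : EuclideanSpace ℝ (Fin d)) : 0 ≤ pnorm p x := by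
  unfold pnorm; positivity

lemma pnorm_pos {x : EuclideanSpace ℝ (Fin d)} (hx : x ≠ 0) : 0 < pnorm p x := by
  obtain ⟨i, hi⟩ : ∃ i, x i ≠ 0 := by
    by_contra! h
    exact hx (by ext i; simp [h i])
  exact Real.rpow_pos_of_pos
    (Finset.sum_pos' (fun j _ => by positivity) ⟨i, Finset.mem_univ i, by positivity⟩) _

lemma pnorm_two (x : EuclideanSpace ℝ (Fin d)) : pnorm 2 x = ‖x‖ := by
  rw [EuclideanSpace.norm_eq, Real.sqrt_eq_rpow, pnorm]
  simp

lemma pnorm_neg (x : EuclideanSpace ℝ (Fin d)) : pnorm p (-x) = pnorm p x := by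
  simp [pnorm]

lemma pnorm_smul (hp : 0 < p) (s : ℝ) (x : EuclideanSpace ℝ (Fin d)) :
    pnorm p (s • x) = |s| * pnorm p x := by
  simp only [pnorm, PiLp.smul_apply, smul_eq_mul, abs_mul,
    Real.mul_rpow (abs_nonneg s) (abs_nonneg _), ← Finset.mul_sum]
  rw [Real.mul_rpow (by positivity) (by positivity), ← Real.rpow_mul (abs_nonneg s),
    mul_one_div_cancel hp.ne', Real.rpow_one]

lemma pnorm_add_le (hp : 1 ≤ p) (x y : EuclideanSpace ℝ (Fin d)) :
    pnorm p (x + y) ≤ pnorm p x + pnorm p y :=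
  Real.Lp_add_le Finset.univ (fun i => x i) (fun i => y i) hp

lemma inner_eq_sum (x y : EuclideanSpace ℝ (Fin d)) : ⟪x, y⟫_ℝ = ∑ i, x i * y i := by
  simp [PiLp.inner_apply, mul_comm]

lemma inner_le_pnorm_mul_pnorm (hpq : p.HolderConjugate q) (x y : EuclideanSpace ℝ (Fin d)) :
    ⟪x, y⟫_ℝ ≤ pnorm p x * pnorm q y := by
  rw [inner_eq_sum]
  exact Real.inner_le_Lp_mul_Lq Finset.univ (fun i => x i) (fun i => y i) hpq

-- `u` is `w i = g i * |g i| ^ (q - 2)` normalised: the equality case of Hölder's inequality.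
lemma exists_pnorm_le_one_inner_eq (hpq : p.HolderConjugate q) (g : EuclideanSpace ℝ (Fin d)) :
    ∃ u : EuclideanSpace ℝ (Fin d), pnorm p u ≤ 1 ∧ ⟪g, u⟫_ℝ = pnorm q g := by
  set S := ∑ i, |g i| ^ q
  have hq : pnorm q g = S ^ (1 / q) := rfl
  let w : EuclideanSpace ℝ (Fin d) := WithLp.toLp 2 fun i => g i * |g i| ^ (q - 2)
  have habs_w : ∀ i, |w i| = |g i| ^ (q - 1) := fun i => by
    rw [show q - 1 = 1 + (q - 2) by ring,
      Real.rpow_add' (abs_nonneg _) (by linarith [hpq.symm.lt]), Real.rpow_one]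
    simp [w, abs_mul, abs_of_nonneg (Real.rpow_nonneg (abs_nonneg (g i)) _)]
  have hpw : pnorm p w = S ^ (1 / p) := by
    simp only [pnorm, habs_w, ← Real.rpow_mul (abs_nonneg _), hpq.symm.sub_one_mul_conj, S]
  have hgw : ⟪g, w⟫_ℝ = S := by
    rw [inner_eq_sum]
    refine Finset.sum_congr rfl fun i _ => ?_
    rw [show q = 2 + (q - 2) by ring, Real.rpow_add' (abs_nonneg _) (by linarith [hpq.symm.lt])]
    simp [w, ← mul_assoc, ← abs_mul_abs_self (g i), ← sq]
  rcases (show 0 ≤ S by positivity).eq_or_lt with hS | hS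
  · refine ⟨0, ?_, ?_⟩
    · simp [pnorm, Real.zero_rpow hpq.pos.ne', Real.zero_rpow (inv_ne_zero hpq.pos.ne')]
    · rw [hq, ← hS, Real.zero_rpow (one_div_pos.2 hpq.symm.pos).ne', inner_zero_right]
  · have hSp : 0 < S ^ (1 / p) := by positivity
    refine ⟨(S ^ (1 / p))⁻¹ • w, ?_, ?_⟩
    · rw [pnorm_smul hpq.pos, hpw, abs_of_pos (inv_pos.2 hSp), inv_mul_cancel₀ hSp.ne']
    · rw [real_inner_smul_right, hgw, hq, inv_mul_eq_iff_eq_mul₀ hSp.ne']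
      simp only [one_div]
      rw [← Real.rpow_add' hS.le (by simp [hpq.inv_add_inv_eq_one]), hpq.inv_add_inv_eq_one,
        Real.rpow_one]

end LpNorm

section SteepestDescent

variable {p q L : ℝ}

lemma inner_add_mul_pnorm_sq_le_of_forall (hpq : p.HolderConjugate q) (hL : 0 < L)
    {g δ : EuclideanSpace ℝ (Fin d)}
    (hδ : ∀ w, ⟪g, δ⟫_ℝ + L * pnorm p δ ^ 2 ≤ ⟪g, w⟫_ℝ + L * pnorm p w ^ 2) :
    ⟪g, δ⟫_ℝ + L * pnorm p δ ^ 2 ≤ -(pnorm q g ^ 2 / (4 * L)) := by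
  obtain ⟨u, hu, hgu⟩ := exists_pnorm_le_one_inner_eq hpq g
  set s := pnorm q g / (2 * L)
  have hs : 0 ≤ s := div_nonneg (pnorm_nonneg q g) (by positivity)
  have hsu : pnorm p ((-s) • u) ≤ s := by
    rw [pnorm_smul hpq.pos, abs_neg, abs_of_nonneg hs]
    exact mul_le_of_le_one_right hs hu
  calc ⟪g, δ⟫_ℝ + L * pnorm p δ ^ 2 ≤ ⟪g, (-s) • u⟫_ℝ + L * pnorm p ((-s) • u) ^ 2 := hδ _
    _ ≤ -s * pnorm q g + L * s ^ 2 := by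
      rw [real_inner_smul_right, hgu]
      gcongr
      exact pnorm_nonneg p _
    _ = -(pnorm q g ^ 2 / (4 * L)) := by
      simp only [s]
      field_simp
      ring

variable {f : EuclideanSpace ℝ (Fin d) → ℝ}

lemma sq_pnorm_gradient_le_inner (hpq : p.HolderConjugate q) (hL : 0 < L)
    (hsmooth : ∀ x y, pnorm q (gradient f y - gradient f x) ≤ L * pnorm p (y - x))
    {X Y : EuclideanSpace ℝ (Fin d)}
    (hX : ∀ z, ⟪gradient f Y, X - Y⟫_ℝ + L * pnorm p (X - Y) ^ 2 ≤
      ⟪gradient f Y, z - Y⟫_ℝ + L * pnorm p (z - Y) ^ 2) :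
    pnorm q (gradient f X) ^ 2 / (16 * L) ≤ ⟪gradient f X, Y - X⟫_ℝ := by
  set r := pnorm p (X - Y)
  set N := pnorm q (gradient f Y)
  have hr : 0 ≤ r := pnorm_nonneg p _
  have hmodel : ⟪gradient f Y, X - Y⟫_ℝ + L * r ^ 2 ≤ -(N ^ 2 / (4 * L)) :=
    inner_add_mul_pnorm_sq_le_of_forall hpq hL fun w => by simpa using hX (Y + w)
  have hholder : -⟪gradient f Y, X - Y⟫_ℝ ≤ r * N := by
    simpa [pnorm_neg, real_inner_comm] using
      inner_le_pnorm_mul_pnorm hpq (X - Y) (-gradient f Y)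
  -- `hmodel` and `hholder` force `2 L r = N`: the step length is exactly `N / (2 L)`.
  have hLr : L * r ≤ N := by
    have hgap : L * r ^ 2 - r * N + N ^ 2 / (4 * L) ≤ 0 := by linarith
    have hsq : (2 * L * r - N) ^ 2 = 4 * L * (L * r ^ 2 - r * N + N ^ 2 / (4 * L)) := by
      field_simp
      ring
    have : 2 * L * r - N = 0 :=
      pow_eq_zero_iff two_ne_zero |>.1 <| le_antisymm
        (hsq ▸ mul_nonpos_of_nonneg_of_nonpos (by positivity) hgap) (sq_nonneg _)
    linarith [pnorm_nonneg q (gradient f Y)]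
  have hlip : ⟪gradient f X - gradient f Y, X - Y⟫_ℝ ≤ L * r ^ 2 := by
    rw [real_inner_comm]
    calc _ ≤ r * pnorm q (gradient f X - gradient f Y) := inner_le_pnorm_mul_pnorm hpq _ _
      _ ≤ r * (L * r) := by gcongr; exact hsmooth Y X
      _ = L * r ^ 2 := by ring
  have hM : pnorm q (gradient f X) ≤ 2 * N := by
    have := pnorm_add_le hpq.symm.lt.le (gradient f Y) (gradient f X - gradient f Y)
    rw [add_sub_cancel] at this
    linarith [hsmooth Y X]
  have hsplit : ⟪gradient f X, Y - X⟫_ℝ =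
      -⟪gradient f Y, X - Y⟫_ℝ - ⟪gradient f X - gradient f Y, X - Y⟫_ℝ := by
    rw [← neg_sub X Y, inner_neg_right, inner_sub_left]
    ring
  calc pnorm q (gradient f X) ^ 2 / (16 * L) ≤ (2 * N) ^ 2 / (16 * L) := by
        gcongr
        exact pnorm_nonneg q _
    _ = N ^ 2 / (4 * L) := by ring
    _ ≤ ⟪gradient f X, Y - X⟫_ℝ := by linarith

end SteepestDescent

lemma holderConjugate_dualExp {p : ℝ} (hp : 1 < p) : p.HolderConjugate (dualExp p) :=
  .conjExponent hp

namespace HASD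

variable {p L : ℝ} {f : EuclideanSpace ℝ (Fin d) → ℝ} {x0 : EuclideanSpace ℝ (Fin d)}
  (h : HASD d p L f x0)

lemma A_nonneg (t : ℕ) : 0 ≤ h.A t := by
  induction t with
  | zero => exact h.A_zero.ge
  | succ t ih => linarith [h.A_succ t, h.a_pos t]

lemma A_succ_pos (t : ℕ) : 0 < h.A (t + 1) := by
  linarith [h.A_succ t, h.a_pos t, h.A_nonneg t]

lemma mul_ρ_mul_sq_a (hL : 0 < L) (t : ℕ) : 18 * L * h.ρ t * h.a (t + 1) ^ 2 = h.A (t + 1) := by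
  rw [h.a_eq, ← h.A_succ]
  field_simp [(h.ρ_pos t).ne']

lemma exists_ψ_eq (t : ℕ) : ∃ c K, ∀ z, h.ψ t z = ‖z - c‖ ^ 2 / 2 + K := by
  induction t with
  | zero => exact ⟨x0, 0, fun z => by rw [h.ψ_zero, pnorm_two]; ring⟩
  | succ t ih =>
    obtain ⟨c, K, hψ⟩ := ih
    set g := gradient f (h.x (t + 1))
    set a := h.a (t + 1)
    refine ⟨c - a • g, K + a * (f (h.x (t + 1)) + ⟪g, c - h.x (t + 1)⟫_ℝ) - a ^ 2 * ‖g‖ ^ 2 / 2,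
      fun z => ?_⟩
    rw [h.ψ_succ, hψ, show z - (c - a • g) = (z - c) + a • g by abel,
      show z - h.x (t + 1) = (z - c) + (c - h.x (t + 1)) by abel, norm_add_sq_real, norm_smul,
      inner_add_right, real_inner_smul_right, real_inner_comm g, Real.norm_eq_abs, mul_pow, sq_abs]
    ring

lemma ψ_eq (t : ℕ) (z : EuclideanSpace ℝ (Fin d)) :
    h.ψ t z = h.ψ t (h.v t) + ‖z - h.v t‖ ^ 2 / 2 := by
  obtain ⟨c, K, hψ⟩ := h.exists_ψ_eq t
  have hvc : h.v t = c := by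
    have := h.v_min t c
    rw [hψ, hψ, sub_self, norm_zero] at this
    have : ‖h.v t - c‖ = 0 := by nlinarith [norm_nonneg (h.v t - c)]
    exact sub_eq_zero.1 (norm_eq_zero.1 this)
  rw [hψ, hψ, hvc, sub_self, norm_zero]
  ring

lemma ψ_le (hconv : ∀ x y, f x + ⟪gradient f x, y - x⟫_ℝ ≤ f y) (t : ℕ)
    (z : EuclideanSpace ℝ (Fin d)) : h.ψ t z ≤ h.A t * f z + ‖z - x0‖ ^ 2 / 2 := by
  induction t with
  | zero => rw [h.ψ_zero, h.A_zero, pnorm_two]; linarith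
  | succ t ih =>
    rw [h.ψ_succ, h.A_succ]
    nlinarith [mul_le_mul_of_nonneg_left (hconv (h.x (t + 1)) z) (h.a_pos t).le]

lemma A_succ_mul_inner_y_sub (t : ℕ) (g : EuclideanSpace ℝ (Fin d)) :
    h.A (t + 1) * ⟪g, h.y t - h.x (t + 1)⟫_ℝ =
      h.A t * ⟪g, h.x t - h.x (t + 1)⟫_ℝ + h.a (t + 1) * ⟪g, h.v t - h.x (t + 1)⟫_ℝ := by
  have hA : h.A t + h.a (t + 1) ≠ 0 := (h.A_succ t ▸ h.A_succ_pos t).ne'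
  have hy : h.y t - h.x (t + 1) = (1 - h.a (t + 1) / h.A (t + 1)) • (h.x t - h.x (t + 1)) +
      (h.a (t + 1) / h.A (t + 1)) • (h.v t - h.x (t + 1)) := by
    rw [h.y_def]
    module
  rw [hy, inner_add_right, real_inner_smul_right, real_inner_smul_right, h.A_succ t]
  field_simp
  ring

lemma sq_a_mul_sq_norm_le_inner (hp : 1 < p) (hL : 0 < L)
    (hsmooth : ∀ x y, pnorm (dualExp p) (gradient f y - gradient f x) ≤ L * pnorm p (y - x))
    (t : ℕ) :
    h.a (t + 1) ^ 2 * ‖gradient f (h.x (t + 1))‖ ^ 2 / 2 ≤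
      h.A (t + 1) * ⟪gradient f (h.x (t + 1)), h.y t - h.x (t + 1)⟫_ℝ := by
  set g := gradient f (h.x (t + 1))
  set N := pnorm (dualExp p) g
  have hN : 0 < N := pnorm_pos (h.grad_ne t)
  have hρ := h.ρ_lb t
  rw [pnorm_two, mul_div_assoc', div_le_iff₀ (by positivity)] at hρ
  have hA : 9 * L * (h.a (t + 1) ^ 2 * ‖g‖ ^ 2) ≤ h.A (t + 1) * N ^ 2 := by
    rw [← h.mul_ρ_mul_sq_a hL t]
    nlinarith [mul_le_mul_of_nonneg_left hρ (by positivity : 0 ≤ 18 * L * h.a (t + 1) ^ 2)]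
  have hstep : N ^ 2 / (16 * L) ≤ ⟪g, h.y t - h.x (t + 1)⟫_ℝ :=
    sq_pnorm_gradient_le_inner (holderConjugate_dualExp hp) hL hsmooth (h.x_min t)
  calc h.a (t + 1) ^ 2 * ‖g‖ ^ 2 / 2 ≤ h.A (t + 1) * (N ^ 2 / (16 * L)) := by
        rw [mul_div_assoc', le_div_iff₀ (by positivity)]
        nlinarith [sq_nonneg (h.a (t + 1) * ‖g‖)]
    _ ≤ _ := mul_le_mul_of_nonneg_left hstep (h.A_succ_pos t).le

lemma A_mul_le_ψ_v (hp : 1 < p) (hL : 0 < L)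
    (hsmooth : ∀ x y, pnorm (dualExp p) (gradient f y - gradient f x) ≤ L * pnorm p (y - x))
    (hconv : ∀ x y, f x + ⟪gradient f x, y - x⟫_ℝ ≤ f y) (t : ℕ) :
    h.A t * f (h.x t) ≤ h.ψ t (h.v t) := by
  induction t with
  | zero => rw [h.A_zero, zero_mul, h.ψ_zero]; positivity
  | succ t ih =>
    set g := gradient f (h.x (t + 1))
    set a := h.a (t + 1)
    have hcut : -(a ^ 2 * ‖g‖ ^ 2 / 2) ≤
        ‖h.v (t + 1) - h.v t‖ ^ 2 / 2 + a * ⟪g, h.v (t + 1) - h.v t⟫_ℝ := by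
      have := norm_add_sq_real (h.v (t + 1) - h.v t) (a • g)
      rw [norm_smul, real_inner_smul_right, real_inner_comm, Real.norm_eq_abs, mul_pow,
        sq_abs] at this
      nlinarith [sq_nonneg ‖h.v (t + 1) - h.v t + a • g‖]
    have hx := mul_le_mul_of_nonneg_left (hconv (h.x (t + 1)) (h.x t)) (h.A_nonneg t)
    have hv : ⟪g, h.v (t + 1) - h.x (t + 1)⟫_ℝ =
        ⟪g, h.v t - h.x (t + 1)⟫_ℝ + ⟪g, h.v (t + 1) - h.v t⟫_ℝ := by
      rw [← inner_add_right, sub_add_sub_cancel']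
    rw [h.ψ_succ, h.ψ_eq t, h.A_succ, hv]
    nlinarith [h.sq_a_mul_sq_norm_le_inner hp hL hsmooth t, h.A_succ_mul_inner_y_sub t g]

lemma A_mul_sub_le (hp : 1 < p) (hL : 0 < L)
    (hsmooth : ∀ x y, pnorm (dualExp p) (gradient f y - gradient f x) ≤ L * pnorm p (y - x))
    (hconv : ∀ x y, f x + ⟪gradient f x, y - x⟫_ℝ ≤ f y) (t : ℕ) (z : EuclideanSpace ℝ (Fin d)) :
    h.A t * (f (h.x t) - f z) ≤ ‖z - x0‖ ^ 2 / 2 := by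
  have := (h.A_mul_le_ψ_v hp hL hsmooth hconv t).trans ((h.v_min t z).trans (h.ψ_le hconv t z))
  linarith

lemma pnorm_div_pnorm_two_le (hL : 0 < L) (t : ℕ) :
    pnorm (dualExp p) (gradient f (h.x (t + 1))) / pnorm 2 (gradient f (h.x (t + 1))) ≤
      12 * √L * (√(h.A (t + 1)) - √(h.A t)) := by
  set g := gradient f (h.x (t + 1))
  set N := pnorm (dualExp p) g
  set σ := √(h.A t)
  set σ' := √(h.A (t + 1))
  have hg : 0 < ‖g‖ := norm_pos_iff.2 (h.grad_ne t)
  have hσ' : 0 < σ' := Real.sqrt_pos.2 (h.A_succ_pos t)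
  have hσ : σ ≤ σ' := Real.sqrt_le_sqrt (by linarith [h.A_succ t, h.a_pos t])
  have ha : h.a (t + 1) = (σ' + σ) * (σ' - σ) := by
    rw [← sq_sub_sq, Real.sq_sqrt (h.A_nonneg _), Real.sq_sqrt (h.A_nonneg _), h.A_succ]
    ring
  have hρ := h.ρ_ub t
  rw [pnorm_two, mul_div_assoc', le_div_iff₀ (pow_pos (pnorm_pos (h.grad_ne t)) 2)] at hρ
  have hσ'N : σ' * N ≤ 6 * √L * h.a (t + 1) * ‖g‖ := by
    refine (pow_le_pow_iff_left₀ (mul_nonneg hσ'.le (pnorm_nonneg _ _))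
      (by have := h.a_pos t; positivity) two_ne_zero).1 ?_
    rw [mul_pow, Real.sq_sqrt (h.A_nonneg _), ← h.mul_ρ_mul_sq_a hL t, mul_pow, mul_pow, mul_pow,
      Real.sq_sqrt hL.le]
    nlinarith [mul_le_mul_of_nonneg_left hρ (by positivity : 0 ≤ 18 * L * h.a (t + 1) ^ 2)]
  rw [pnorm_two, div_le_iff₀ hg]
  refine le_of_mul_le_mul_left ?_ hσ'
  calc σ' * N ≤ 6 * √L * ((σ' + σ) * (σ' - σ)) * ‖g‖ := ha ▸ hσ'N
    _ ≤ 6 * √L * ((σ' + σ') * (σ' - σ)) * ‖g‖ := by gcongr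
    _ = σ' * (12 * √L * (σ' - σ) * ‖g‖) := by ring

lemma sum_pnorm_div_pnorm_two_le (hL : 0 < L) (T : ℕ) :
    ∑ t ∈ Finset.range T,
        pnorm (dualExp p) (gradient f (h.x (t + 1))) / pnorm 2 (gradient f (h.x (t + 1))) ≤
      12 * √L * √(h.A T) := by
  calc _ ≤ ∑ t ∈ Finset.range T, 12 * √L * (√(h.A (t + 1)) - √(h.A t)) :=
        Finset.sum_le_sum fun t _ => h.pnorm_div_pnorm_two_le hL t
    _ = 12 * √L * √(h.A T) := by
      rw [← Finset.mul_sum, Finset.sum_range_sub (fun t => √(h.A t)), h.A_zero, Real.sqrt_zero,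
        sub_zero]

end HASD

theorem stmt7_general {d : ℕ} (p L μ : ℝ) (hp : 2 ≤ p) (hL : 0 < L) (hμ : 0 < μ)
    (f : EuclideanSpace ℝ (Fin d) → ℝ)
    (hsmooth : ∀ x y : EuclideanSpace ℝ (Fin d),
      pnorm (dualExp p) (gradient f y - gradient f x) ≤ L * pnorm p (y - x))
    (hsc : ∀ x y : EuclideanSpace ℝ (Fin d),
      f y - f x - ⟪gradient f x, y - x⟫_ℝ ≥ (μ / 2) * pnorm 2 (y - x) ^ 2)
    (xstar : EuclideanSpace ℝ (Fin d)) (hxstar : ∀ z, f xstar ≤ f z)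
    (x0 : EuclideanSpace ℝ (Fin d)) (h : HASD d p L f x0)
    (T : ℕ) (G Ghat : ℝ)
    (hG : G = (1 / (T : ℝ)) * ∑ t ∈ Finset.range T,
      pnorm (dualExp p) (gradient f (h.x (t + 1))) / pnorm 2 (gradient f (h.x (t + 1))))
    (hGhat : 1 ≤ Ghat) (hGG : Ghat ≤ G)
    (hT : (36 / Ghat) * Real.sqrt (L / μ) ≤ (T : ℝ)) :
    f (h.x T) - f xstar ≤ (f x0 - f xstar) / 2 := by
  have hconv : ∀ x y, f x + ⟪gradient f x, y - x⟫_ℝ ≤ f y := fun x y => by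
    nlinarith [hsc x y, pnorm_nonneg 2 (y - x)]
  have hdist : μ * ‖xstar - x0‖ ^ 2 ≤ 2 * (f x0 - f xstar) := by
    have hgrad : gradient f xstar = 0 := by
      rw [gradient, IsLocalMin.fderiv_eq_zero (.of_forall hxstar), map_zero]
    have := hsc xstar x0
    rw [hgrad, inner_zero_left, pnorm_two, norm_sub_rev] at this
    linarith
  have hsum : 36 * √(L / μ) ≤ 12 * √L * √(h.A T) := by
    refine le_trans ?_ (h.sum_pnorm_div_pnorm_two_le hL T)
    calc 36 * √(L / μ) = Ghat * (36 / Ghat * √(L / μ)) := by field_simp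
      _ ≤ G * T := by gcongr; linarith
      _ = _ := by
        rw [hG]
        rcases eq_or_ne T 0 with rfl | hT0
        · simp
        · field_simp
  have hA : 9 ≤ μ * h.A T := by
    rw [Real.sqrt_div hL.le, show 36 * (√L / √μ) = 12 * √L * (3 / √μ) by ring] at hsum
    have h3 := le_of_mul_le_mul_left hsum (by positivity)
    rw [div_le_iff₀' (Real.sqrt_pos.2 hμ), ← Real.sqrt_mul hμ.le] at h3
    nlinarith [Real.sq_sqrt (mul_nonneg hμ.le (h.A_nonneg T))]
  have hrate := h.A_mul_sub_le (by linarith) hL hsmooth hconv T xstar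
  have hgap : 0 ≤ f (h.x T) - f xstar := sub_nonneg.2 (hxstar _)
  have hcontract : 9 * (f (h.x T) - f xstar) ≤ f x0 - f xstar :=
    calc 9 * (f (h.x T) - f xstar) ≤ μ * (h.A T * (f (h.x T) - f xstar)) := by
          rw [← mul_assoc]; gcongr
      _ ≤ μ * (‖xstar - x0‖ ^ 2 / 2) := by gcongr
      _ ≤ f x0 - f xstar := by linarith
  linarith

theorem stmt7 {d : ℕ} (p L μ : ℝ) (hp : 2 ≤ p) (hL : 0 < L) (hμ : 0 < μ)
    (f : EuclideanSpace ℝ (Fin d) → ℝ) (hconv : ConvexOn ℝ Set.univ f)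
    (hf : Differentiable ℝ f)
    (hsmooth : ∀ x y : EuclideanSpace ℝ (Fin d),
      pnorm (dualExp p) (gradient f y - gradient f x) ≤ L * pnorm p (y - x))
    (hsc : ∀ x y : EuclideanSpace ℝ (Fin d),
      f y - f x - ⟪gradient f x, y - x⟫_ℝ ≥ (μ / 2) * pnorm 2 (y - x) ^ 2)
    (xstar : EuclideanSpace ℝ (Fin d)) (hxstar : ∀ z, f xstar ≤ f z)
    (x0 : EuclideanSpace ℝ (Fin d)) (h : HASD d p L f x0)
    (T : ℕ) (G Ghat : ℝ)
    (hG : G = (1 / (T : ℝ)) * ∑ t ∈ Finset.range T,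
      pnorm (dualExp p) (gradient f (h.x (t + 1))) / pnorm 2 (gradient f (h.x (t + 1))))
    (hGhat : 1 ≤ Ghat) (hGG : Ghat ≤ G)
    (hT : (36 / Ghat) * Real.sqrt (L / μ) ≤ (T : ℝ)) :
    f (h.x T) - f xstar ≤ (f x0 - f xstar) / 2 :=
  stmt7_general p L μ hp hL hμ f hsmooth hsc xstar hxstar x0 h T G Ghat hG hGhat hGG hT
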